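/- arXiv:1910.06532 — 3 statements merged into one kernel-verified Lean document; each statement's English description precedes it below -/
import Mathlib

section
/- Let f be convex and differentiable with minimizer x*, let g(x) = f(x) + (μ/2)‖x − x₀‖² with minimizer x̃*. Then for any point x_a, ‖∇f(x_a)‖² ≤ 6‖∇g(x_a)‖² + 12 μ² ‖x₀ − x*‖². -/
/-!
Write `g' x = f' x + μ (x - x₀)`. Since `f'` is monotone (convexity) and `g'` vanishes at the
proximal point `x̃*`, `g'` is `μ`-strongly monotone around `x̃*`, whence `μ ‖x_a - x̃*‖ ≤ ‖g' x_a‖`.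
Comparing the values of `f` and `g` at `x*` and `x̃*` gives `‖x̃* - x₀‖ ≤ ‖x* - x₀‖`. Hence
`‖f' x_a‖ ≤ ‖g' x_a‖ + μ ‖x_a - x̃*‖ + μ ‖x̃* - x₀‖ ≤ 2 ‖g' x_a‖ + μ ‖x₀ - x*‖`, and squaring
with `4ab ≤ 2a² + 2b²` gives the claim.
-/

open RealInnerProductSpace Set

theorem norm_sub_le_of_forall_add_sq_le {E : Type*} [SeminormedAddCommGroup E] {f : E → ℝ}
    {μ : ℝ} (hμ : 0 < μ) {x₀ xstar xt : E}
    (hmin : ∀ x, f xstar ≤ f x)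
    (hreg : ∀ x, f xt + μ / 2 * ‖xt - x₀‖ ^ 2 ≤ f x + μ / 2 * ‖x - x₀‖ ^ 2) :
    ‖xt - x₀‖ ≤ ‖xstar - x₀‖ := by
  have hsq : ‖xt - x₀‖ ^ 2 ≤ ‖xstar - x₀‖ ^ 2 := by nlinarith [hmin xt, hreg xstar]
  exact (pow_le_pow_iff_left₀ (norm_nonneg _) (norm_nonneg _) two_ne_zero).1 hsq

variable {E : Type*} [NormedAddCommGroup E] [InnerProductSpace ℝ E]

theorem mul_norm_le_norm_add_smul {u a : E} {μ : ℝ} (h : 0 ≤ ⟪u, a⟫) :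
    μ * ‖a‖ ≤ ‖u + μ • a‖ := by
  have hmul : μ * ‖a‖ * ‖a‖ ≤ ‖u + μ • a‖ * ‖a‖ :=
    calc μ * ‖a‖ * ‖a‖ ≤ ⟪u, a⟫ + μ * ‖a‖ ^ 2 := by nlinarith
      _ = ⟪u + μ • a, a⟫ := by
        rw [inner_add_left, real_inner_smul_left, real_inner_self_eq_norm_sq]
      _ ≤ ‖u + μ • a‖ * ‖a‖ := real_inner_le_norm _ _
  rcases (norm_nonneg a).eq_or_lt with ha | ha
  · rw [← ha, mul_zero]; exact norm_nonneg _
  · exact le_of_mul_le_mul_right hmul ha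

variable [CompleteSpace E]

theorem HasGradientAt.add {f g : E → ℝ} {u v x : E} (hf : HasGradientAt f u x)
    (hg : HasGradientAt g v x) : HasGradientAt (fun y => f y + g y) (u + v) x := by
  rw [hasGradientAt_iff_hasFDerivAt, map_add]
  exact hf.hasFDerivAt.add hg.hasFDerivAt

theorem hasGradientAt_const_mul_norm_sub_sq (c : ℝ) (x₀ x : E) :
    HasGradientAt (fun y => c / 2 * ‖y - x₀‖ ^ 2) (c • (x - x₀)) x := by
  rw [hasGradientAt_iff_hasFDerivAt]
  refine (((hasFDerivAt_id x).sub_const x₀).norm_sq.const_mul (c / 2)).congr_fderiv ?_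
  ext w
  simp
  ring

theorem IsLocalMin.hasGradientAt_eq_zero {f : E → ℝ} {v x : E} (h : IsLocalMin f x)
    (hf : HasGradientAt f v x) : v = 0 := by
  simpa using h.hasFDerivAt_eq_zero hf.hasFDerivAt

theorem ConvexOn.inner_sub_le_of_hasGradientAt {f : E → ℝ} {v x : E} (hf : ConvexOn ℝ univ f)
    (hv : HasGradientAt f v x) (y : E) : ⟪v, y - x⟫ ≤ f y - f x := by
  have hline : HasDerivAt (f ∘ AffineMap.lineMap (k := ℝ) x y) ⟪v, y - x⟫ 0 := by
    simpa using hv.hasFDerivAt.comp_hasDerivAt_of_eq 0 AffineMap.hasDerivAt_lineMap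
      (AffineMap.lineMap_apply_zero x y).symm
  simpa [slope] using
    (hf.comp_affineMap _).le_slope_of_hasDerivAt (mem_univ 0) (mem_univ 1) one_pos hline

theorem ConvexOn.inner_sub_nonneg_of_hasGradientAt {f : E → ℝ} {u v x y : E}
    (hf : ConvexOn ℝ univ f) (hu : HasGradientAt f u x) (hv : HasGradientAt f v y) :
    0 ≤ ⟪u - v, x - y⟫ := by
  have hx := hf.inner_sub_le_of_hasGradientAt hu y
  have hy := hf.inner_sub_le_of_hasGradientAt hv x
  rw [← neg_sub x y, inner_neg_right] at hx
  rw [inner_sub_left]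
  linarith

theorem stmt_6 {d : ℕ} (f : EuclideanSpace ℝ (Fin d) → ℝ)
    (f' g' : EuclideanSpace ℝ (Fin d) → EuclideanSpace ℝ (Fin d))
    (hcvx : ConvexOn ℝ Set.univ f)
    (hgrad : ∀ x, HasGradientAt f (f' x) x)
    (xstar : EuclideanSpace ℝ (Fin d)) (hmin : ∀ x, f xstar ≤ f x)
    (μ : ℝ) (hμ : 0 < μ) (x₀ : EuclideanSpace ℝ (Fin d))
    (hg' : ∀ x, HasGradientAt (fun y => f y + μ / 2 * ‖y - x₀‖ ^ 2) (g' x) x)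
    (xtstar : EuclideanSpace ℝ (Fin d))
    (hgmin : ∀ x, f xtstar + μ / 2 * ‖xtstar - x₀‖ ^ 2 ≤ f x + μ / 2 * ‖x - x₀‖ ^ 2)
    (xa : EuclideanSpace ℝ (Fin d)) :
    ‖f' xa‖ ^ 2 ≤ 6 * ‖g' xa‖ ^ 2 + 12 * μ ^ 2 * ‖x₀ - xstar‖ ^ 2 := by
  have hg : ∀ x, g' x = f' x + μ • (x - x₀) := fun x =>
    (hg' x).unique ((hgrad x).add (hasGradientAt_const_mul_norm_sub_sq μ x₀ x))
  have hgt : g' xtstar = 0 :=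
    IsLocalMin.hasGradientAt_eq_zero (Filter.Eventually.of_forall hgmin) (hg' xtstar)
  have hclose : μ * ‖xa - xtstar‖ ≤ ‖g' xa‖ := by
    have hgxa : g' xa = f' xa - f' xtstar + μ • (xa - xtstar) := by
      rw [← sub_zero (g' xa), ← hgt, hg, hg]; module
    rw [hgxa]
    exact mul_norm_le_norm_add_smul
      (hcvx.inner_sub_nonneg_of_hasGradientAt (hgrad xa) (hgrad xtstar))
  have hdist : ‖xtstar - x₀‖ ≤ ‖x₀ - xstar‖ :=
    norm_sub_rev x₀ xstar ▸ norm_sub_le_of_forall_add_sq_le hμ hmin hgmin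
  have hbound : ‖f' xa‖ ≤ 2 * ‖g' xa‖ + μ * ‖x₀ - xstar‖ :=
    calc ‖f' xa‖ = ‖g' xa - μ • (xa - xtstar) - μ • (xtstar - x₀)‖ := by
          rw [hg]; congr 1; module
      _ ≤ ‖g' xa‖ + μ * ‖xa - xtstar‖ + μ * ‖xtstar - x₀‖ := by
          refine (norm_sub_le _ _).trans (add_le_add (norm_sub_le _ _) le_rfl) |>.trans_eq ?_
          simp only [norm_smul, Real.norm_of_nonneg hμ.le]
      _ ≤ 2 * ‖g' xa‖ + μ * ‖x₀ - xstar‖ := by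
          linarith [mul_le_mul_of_nonneg_left hdist hμ.le]
  calc ‖f' xa‖ ^ 2 ≤ (2 * ‖g' xa‖ + μ * ‖x₀ - xstar‖) ^ 2 :=
        pow_le_pow_left₀ (norm_nonneg _) hbound 2
    _ ≤ 6 * ‖g' xa‖ ^ 2 + 12 * μ ^ 2 * ‖x₀ - xstar‖ ^ 2 := by
        nlinarith [sq_nonneg (‖g' xa‖ - μ * ‖x₀ - xstar‖), sq_nonneg (μ * ‖x₀ - xstar‖)]
end

section
/- Let f be differentiable and σ-bounded nonconvex, and let g(x) = f(x) + ((σ + θ)/2)‖x − x̄‖². Then for any x, ‖∇f(x)‖² ≤ ‖∇g(x)‖² − θ(σ + θ)‖x − x̄‖² + 2(σ + θ)(f(x̄) − f(x)). -/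
open RealInnerProductSpace

section

variable {E : Type*} [NormedAddCommGroup E] [InnerProductSpace ℝ E]

theorem HasGradientAt.add_mul_norm_sub_sq [CompleteSpace E] {f : E → ℝ} {f' x : E}
    (hf : HasGradientAt f f' x) (c : ℝ) (a : E) :
    HasGradientAt (fun y => f y + c / 2 * ‖y - a‖ ^ 2) (f' + c • (x - a)) x := by
  rw [hasGradientAt_iff_hasFDerivAt] at hf ⊢
  refine (hf.add ((((hasFDerivAt_id x).sub_const a).norm_sq).const_mul (c / 2))).congr_fderiv ?_
  ext y
  simp only [id_eq, map_sub, map_add, map_smul, ContinuousLinearMap.comp_id, add_apply,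
    smul_apply, sub_apply, InnerProductSpace.toDual_apply_apply, coe_innerSL_apply, nsmul_eq_mul,
    Nat.cast_ofNat, smul_eq_mul, add_right_inj]
  ring

/-- Expanding the square, the right side minus `‖u‖ ^ 2` equals
`2 (σ + θ) (r - ⟪u, b - a⟫ + σ / 2 ‖b - a‖ ^ 2)`. -/
theorem norm_sq_le_norm_add_smul_sub_sq {u a b : E} {σ θ r : ℝ} (hc : 0 ≤ σ + θ)
    (h : r ≥ ⟪u, b - a⟫ - σ / 2 * ‖b - a‖ ^ 2) :
    ‖u‖ ^ 2 ≤ ‖u + (σ + θ) • (a - b)‖ ^ 2 - θ * (σ + θ) * ‖a - b‖ ^ 2 + 2 * (σ + θ) * r := by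
  have hexp : ‖u + (σ + θ) • (a - b)‖ ^ 2
      = ‖u‖ ^ 2 + 2 * (σ + θ) * ⟪u, a - b⟫ + (σ + θ) ^ 2 * ‖a - b‖ ^ 2 := by
    rw [norm_add_sq_real, real_inner_smul_right, norm_smul, mul_pow, Real.norm_eq_abs, sq_abs]
    ring
  have hinner : ⟪u, b - a⟫ = -⟪u, a - b⟫ := by rw [← inner_neg_right, neg_sub]
  rw [hinner, norm_sub_rev] at h
  rw [hexp]
  linarith [mul_le_mul_of_nonneg_left h hc]

end

theorem stmt_13 {d : ℕ} (f : EuclideanSpace ℝ (Fin d) → ℝ)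
    (f' g' : EuclideanSpace ℝ (Fin d) → EuclideanSpace ℝ (Fin d))
    (σ θ : ℝ) (hσ : 0 < σ) (hθ : 0 < θ)
    (hgrad : ∀ x, HasGradientAt f (f' x) x)
    (hbnc : ∀ x y, f y - f x ≥ ⟪f' x, y - x⟫ - σ / 2 * ‖y - x‖ ^ 2)
    (xbar : EuclideanSpace ℝ (Fin d))
    (hg' : ∀ x, HasGradientAt (fun y => f y + (σ + θ) / 2 * ‖y - xbar‖ ^ 2) (g' x) x) :
    ∀ x, ‖f' x‖ ^ 2 ≤ ‖g' x‖ ^ 2 - θ * (σ + θ) * ‖x - xbar‖ ^ 2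
      + 2 * (σ + θ) * (f xbar - f x) := by
  intro x
  rw [(hg' x).unique ((hgrad x).add_mul_norm_sub_sq (σ + θ) xbar)]
  exact norm_sq_le_norm_add_smul_sub_sq (by positivity) (hbnc x xbar)
end

section
/- Let {a_s} be nonnegative reals and {ρ_s}, {c_s} reals, and suppose a_s ≤ ρ_s a_{s−1} + 2μ_s(c_{s−1} − c_s) for s = 1,…,S, where μ_s = μ₀ ∏_{τ=1}^s ρ_τ with μ₀ > 0 and 0 < ρ_s < 1, and c_s ≥ c* for all s. Then a_S ≤ (∏_{τ=1}^S ρ_τ) a₀ + 2μ₀ (∏_{τ=1}^S ρ_τ)(c₀ − c*). -/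
theorem stmt_17 (S : ℕ) (hS : 1 ≤ S) (a c : ℕ → ℝ) (ρ : ℕ → ℝ)
    (μ₀ cstar : ℝ) (hμ₀ : 0 < μ₀)
    (ha : ∀ s, 0 ≤ a s)
    (hρ : ∀ s, 0 < ρ s ∧ ρ s < 1)
    (hc : ∀ s, cstar ≤ c s)
    (hrec : ∀ s, 1 ≤ s → s ≤ S →
      a s ≤ ρ s * a (s - 1)
        + 2 * (μ₀ * ∏ τ ∈ Finset.Icc 1 s, ρ τ) * (c (s - 1) - c s)) :
    a S ≤ (∏ τ ∈ Finset.Icc 1 S, ρ τ) * a 0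
      + 2 * μ₀ * (∏ τ ∈ Finset.Icc 1 S, ρ τ) * (c 0 - cstar) := by
  have hP : ∀ s, 0 < ∏ τ ∈ Finset.Icc 1 s, ρ τ := fun s =>
    Finset.prod_pos fun i _ => (hρ i).1
  have key : ∀ s, s ≤ S →
      a s ≤ (∏ τ ∈ Finset.Icc 1 s, ρ τ) * (a 0 + 2 * μ₀ * (c 0 - c s)) := by
    intro s
    induction s with
    | zero => intro _; simp
    | succ n ih =>
      intro hle
      have h1 := hrec (n+1) (by omega) hle
      have h2 := ih (by omega)
      simp only [Nat.add_sub_cancel] at h1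
      rw [Finset.prod_Icc_succ_top (by omega : 1 ≤ n+1)] at h1 ⊢
      have hρn := (hρ (n+1)).1
      calc a (n+1) ≤ ρ (n+1) * a n
            + 2 * (μ₀ * ((∏ τ ∈ Finset.Icc 1 n, ρ τ) * ρ (n+1))) * (c n - c (n+1)) := h1
        _ ≤ ρ (n+1) * ((∏ τ ∈ Finset.Icc 1 n, ρ τ) * (a 0 + 2 * μ₀ * (c 0 - c n)))
            + 2 * (μ₀ * ((∏ τ ∈ Finset.Icc 1 n, ρ τ) * ρ (n+1))) * (c n - c (n+1)) := by
            nlinarith [hρn, h2]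
        _ = (∏ τ ∈ Finset.Icc 1 n, ρ τ) * ρ (n+1)
            * (a 0 + 2 * μ₀ * (c 0 - c (n+1))) := by ring
  have hS' := key S le_rfl
  have hcS := hc S
  have h3 := mul_le_mul_of_nonneg_left (by linarith : c 0 - c S ≤ c 0 - cstar) (hP S).le
  nlinarith [hP S, hμ₀, h3]
end
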